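/- arXiv:2302.02442 — 2 statements merged into one kernel-verified Lean document; each statement's English description precedes it below -/
import Mathlib

section
/- For any smooth vector field u : ℝ³ → ℝ³, inc(def u) = 0, where def u = (∇u + (∇u)ᵀ)/2 and (inc g)_{ij} = Σ_{a,b,s,t} ε_{iab} ε_{jst} ∂_a ∂_s g_{bt}. -/
/-- Partial derivative ∂_i of a scalar field on ℝⁿ. -/
noncomputable def pd {n : ℕ} (i : Fin n) (f : (Fin n → ℝ) → ℝ) (x : Fin n → ℝ) : ℝ :=
  fderiv ℝ f x (Pi.single i 1)

/-- Second partial derivative ∂_i ∂_j. -/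
noncomputable def pd2 {n : ℕ} (i j : Fin n) (f : (Fin n → ℝ) → ℝ) (x : Fin n → ℝ) : ℝ :=
  pd i (pd j f) x

/-- The Levi-Civita symbol ε_{ijk} on three indices. -/
noncomputable def levi (i j k : Fin 3) : ℝ :=
  (((j : ℕ) : ℝ) - ((i : ℕ) : ℝ)) * (((k : ℕ) : ℝ) - ((i : ℕ) : ℝ)) *
    (((k : ℕ) : ℝ) - ((j : ℕ) : ℝ)) / 2

/-- (inc g)_{ij} = Σ_{a,b,s,t} ε_{iab} ε_{jst} ∂_a ∂_s g_{bt}. -/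
noncomputable def inc (g : (Fin 3 → ℝ) → Matrix (Fin 3) (Fin 3) ℝ)
    (x : Fin 3 → ℝ) (i j : Fin 3) : ℝ :=
  ∑ a : Fin 3, ∑ b : Fin 3, ∑ s : Fin 3, ∑ t : Fin 3,
    levi i a b * levi j s t * pd2 a s (fun y => g y b t) x

/-- def u = (grad u + (grad u)ᵀ)/2, with (grad u)_{ij} = ∂_i u_j. -/
noncomputable def defm (u : (Fin 3 → ℝ) → (Fin 3 → ℝ)) (y : Fin 3 → ℝ) :
    Matrix (Fin 3) (Fin 3) ℝ :=
  fun i j => (pd i (fun z => u z j) y + pd j (fun z => u z i) y) / 2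

/- ### Auxiliary lemmas -/

lemma pd_contDiff {n : ℕ} {f : (Fin n → ℝ) → ℝ} (hf : ContDiff ℝ (⊤ : ℕ∞) f) (i : Fin n) :
    ContDiff ℝ (⊤ : ℕ∞) (pd i f) :=
  (hf.fderiv_right (by simp)).clm_apply contDiff_const

lemma pd_comm {n : ℕ} {f : (Fin n → ℝ) → ℝ} (hf : ContDiff ℝ (⊤ : ℕ∞) f) (i j : Fin n)
    (x : Fin n → ℝ) : pd i (pd j f) x = pd j (pd i f) x := by
  have hd : ∀ y, HasFDerivAt f (fderiv ℝ f y) y := fun y =>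
    (hf.differentiable (by simp)).differentiableAt.hasFDerivAt
  have hd2 : HasFDerivAt (fderiv ℝ f) (fderiv ℝ (fderiv ℝ f) x) x :=
    ((hf.fderiv_right (m := (⊤ : ℕ∞)) (by simp)).differentiable (by simp)).differentiableAt.hasFDerivAt
  have hsym := second_derivative_symmetric hd hd2
  have expand : ∀ p q : Fin n,
      pd p (pd q f) x = fderiv ℝ (fderiv ℝ f) x (Pi.single p 1) (Pi.single q 1) := by
    intro p q
    show fderiv ℝ (fun y => fderiv ℝ f y (Pi.single q 1)) x (Pi.single p 1) = _
    rw [fderiv_clm_apply (((hf.fderiv_right (m := (⊤ : ℕ∞)) (by simp)).differentiable (by simp)).differentiableAt)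
      (differentiableAt_const _)]
    simp
  rw [expand, expand]
  exact hsym _ _

lemma pd_comm' {n : ℕ} {f : (Fin n → ℝ) → ℝ} (hf : ContDiff ℝ (⊤ : ℕ∞) f) (i j : Fin n) :
    pd i (pd j f) = pd j (pd i f) := funext (pd_comm hf i j)

lemma pd_add {n : ℕ} {f g : (Fin n → ℝ) → ℝ} (hf : Differentiable ℝ f)
    (hg : Differentiable ℝ g) (i : Fin n) (x : Fin n → ℝ) :
    pd i (fun y => f y + g y) x = pd i f x + pd i g x := by
  unfold pd
  rw [fderiv_fun_add (hf x) (hg x)]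
  simp

lemma pd_div2 {n : ℕ} {f : (Fin n → ℝ) → ℝ} (hf : Differentiable ℝ f) (i : Fin n)
    (x : Fin n → ℝ) : pd i (fun y => f y / 2) x = pd i f x / 2 := by
  unfold pd
  have : (fun y => f y / 2) = fun y => (2:ℝ)⁻¹ * f y := by funext y; ring
  rw [this, fderiv_const_mul (hf x)]
  simp; ring

lemma levi_antisym_sum (i : Fin 3) (S : Fin 3 → Fin 3 → ℝ) (hS : ∀ a b, S a b = S b a) :
    ∑ a : Fin 3, ∑ b : Fin 3, levi i a b * S a b = 0 := by
  fin_cases i <;>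
  · simp only [Fin.sum_univ_three, levi]
    norm_num
    linarith [hS 0 1, hS 0 2, hS 1 2]

/-- Third partial derivatives: D3 u x p q r w = ∂_p ∂_q ∂_r u_w at x. -/
noncomputable def D3 (u : (Fin 3 → ℝ) → (Fin 3 → ℝ)) (x : Fin 3 → ℝ)
    (p q r w : Fin 3) : ℝ :=
  pd p (pd q (pd r (fun y => u y w))) x

theorem stmt7 (u : (Fin 3 → ℝ) → (Fin 3 → ℝ)) (hu : ContDiff ℝ (⊤ : ℕ∞) u) :
    ∀ (x : Fin 3 → ℝ) (i j : Fin 3), inc (fun y => defm u y) x i j = 0 := by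
  intro x i j
  -- component smoothness
  have hcomp : ∀ w : Fin 3, ContDiff ℝ (⊤ : ℕ∞) (fun y => u y w) := fun w =>
    (ContinuousLinearMap.proj w : ((Fin 3 → ℝ)) →L[ℝ] ℝ).contDiff.comp hu
  -- expand pd2 of defm entries
  have key : ∀ a b s t : Fin 3, pd2 a s (fun y => defm u y b t) x
      = (D3 u x a s b t + D3 u x a s t b) / 2 := by
    intro a b s t
    have hF : ContDiff ℝ (⊤ : ℕ∞) (pd b (fun z => u z t)) := pd_contDiff (hcomp t) b
    have hG : ContDiff ℝ (⊤ : ℕ∞) (pd t (fun z => u z b)) := pd_contDiff (hcomp b) t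
    have hFs : ContDiff ℝ (⊤ : ℕ∞) (pd s (pd b (fun z => u z t))) := pd_contDiff hF s
    have hGs : ContDiff ℝ (⊤ : ℕ∞) (pd s (pd t (fun z => u z b))) := pd_contDiff hG s
    have step1 : pd s (fun y => defm u y b t)
        = fun y => (pd s (pd b (fun z => u z t)) y + pd s (pd t (fun z => u z b)) y) / 2 := by
      funext y
      show pd s (fun y => (pd b (fun z => u z t) y + pd t (fun z => u z b) y) / 2) y = _
      rw [pd_div2 ((hF.differentiable (by simp)).fun_add (hG.differentiable (by simp))) s y,
        pd_add (hF.differentiable (by simp)) (hG.differentiable (by simp)) s y]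
    show pd a (pd s fun y => defm u y b t) x = _
    rw [step1, pd_div2 ((hFs.differentiable (by simp)).fun_add (hGs.differentiable (by simp))) a x,
      pd_add (hFs.differentiable (by simp)) (hGs.differentiable (by simp)) a x]
    rfl
  -- symmetry of third derivatives
  have hsym1 : ∀ a s b t : Fin 3, D3 u x a s b t = D3 u x b s a t := by
    intro a s b t
    unfold D3
    rw [pd_comm' (hcomp t) s b, pd_comm (pd_contDiff (hcomp t) s) a b x,
      pd_comm' (hcomp t) a s]
  have hsym2 : ∀ a s t b : Fin 3, D3 u x a s t b = D3 u x a t s b := by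
    intro a s t b
    unfold D3
    rw [pd_comm' (hcomp b) s t]
  -- split the sum
  unfold inc
  simp only [key]
  have split : ∀ a b s t : Fin 3,
      levi i a b * levi j s t * ((D3 u x a s b t + D3 u x a s t b) / 2)
      = levi i a b * (levi j s t * (D3 u x a s b t / 2))
        + levi i a b * (levi j s t * (D3 u x a s t b / 2)) := by
    intro a b s t; ring
  simp only [split, Finset.sum_add_distrib]
  have sum1 : (∑ a : Fin 3, ∑ b : Fin 3, ∑ s : Fin 3, ∑ t : Fin 3,
      levi i a b * (levi j s t * (D3 u x a s b t / 2))) = 0 := by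
    have factor : ∀ a b : Fin 3,
        (∑ s : Fin 3, ∑ t : Fin 3, levi i a b * (levi j s t * (D3 u x a s b t / 2)))
        = levi i a b * ∑ s : Fin 3, ∑ t : Fin 3, levi j s t * (D3 u x a s b t / 2) := by
      intro a b; simp [Finset.mul_sum]
    simp only [factor]
    exact levi_antisym_sum i _ (fun a b => by
      congr 1; ext s; congr 1; ext t; rw [hsym1 a s b t])
  have sum2 : (∑ a : Fin 3, ∑ b : Fin 3, ∑ s : Fin 3, ∑ t : Fin 3,
      levi i a b * (levi j s t * (D3 u x a s t b / 2))) = 0 := by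
    have inner : ∀ a b : Fin 3,
        (∑ s : Fin 3, ∑ t : Fin 3, levi j s t * (D3 u x a s t b / 2)) = 0 :=
      fun a b => levi_antisym_sum j _ (fun s t => by rw [hsym2 a s t b])
    have factor : ∀ a b : Fin 3,
        (∑ s : Fin 3, ∑ t : Fin 3, levi i a b * (levi j s t * (D3 u x a s t b / 2)))
        = levi i a b * ∑ s : Fin 3, ∑ t : Fin 3, levi j s t * (D3 u x a s t b / 2) := by
      intro a b; simp [Finset.mul_sum]
    simp only [factor, inner, mul_zero, Finset.sum_const_zero]
  rw [sum1, sum2, add_zero]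
end

section
/- Rigidity theorem: let Ω ⊆ ℝⁿ be a connected open set and let φ, φ₀ : Ω → ℝⁿ be C¹ maps with Dφ₀(x) invertible for all x, such that Dφ(x)·(Dφ(x))ᵀ = Dφ₀(x)·(Dφ₀(x))ᵀ for all x ∈ Ω. Then there exist c ∈ ℝⁿ and Q ∈ O(n) ... in fact if det Dφ and det Dφ₀ have the same sign, Q ∈ SO(n), such that φ = c + Q ∘ φ₀ on Ω. -/
/-- Jacobian matrix (Dφ)_{ij} = ∂_i φ_j. -/
noncomputable def jac {n : ℕ} (φ : (Fin n → ℝ) → (Fin n → ℝ)) (x : Fin n → ℝ) :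
    Matrix (Fin n) (Fin n) ℝ :=
  fun i j => pd i (fun z => φ z j) x

open Set Metric Filter Topology Matrix AffineMap

theorem IsPreconnected.apply_eq_of_eventually_eq {X Y : Type*} [TopologicalSpace X] {s : Set X}
    (hs : IsPreconnected s) {h : X → Y} (hloc : ∀ x ∈ s, ∀ᶠ y in 𝓝 x, h y = h x) {x₀ x : X}
    (hx₀ : x₀ ∈ s) (hx : x ∈ s) : h x = h x₀ := by
  have := isPreconnected_iff_preconnectedSpace.mp hs
  have hconst : IsLocallyConstant (s.domRestrict h) :=
    (IsLocallyConstant.iff_eventually_eq _).2 fun y =>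
      (continuous_subtype_val.tendsto y).eventually (hloc y y.2)
  exact hconst.apply_eq_of_preconnectedSpace ⟨x, hx⟩ ⟨x₀, hx₀⟩

theorem ContinuousLinearMap.norm_comp_inverse_apply {E F : Type*} [NormedAddCommGroup E]
    [NormedSpace ℝ E] [NormedAddCommGroup F] [NormedSpace ℝ F] {A B : E →L[ℝ] F}
    (hB : B.IsInvertible) (hAB : ∀ v, ‖A v‖ = ‖B v‖) (v : F) : ‖(A ∘L B.inverse) v‖ = ‖v‖ := by
  obtain ⟨B, rfl⟩ := hB
  simp [hAB]

section StrictConvex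

variable {E G : Type*} [NormedAddCommGroup E] [NormedSpace ℝ E]
  [NormedAddCommGroup G] [NormedSpace ℝ G] [StrictConvexSpace ℝ G]

theorem Convex.fderiv_apply_sub_eq_of_dist_eq {s : Set E} (hs : Convex ℝ s) {ψ : E → G}
    (hψ : ∀ x ∈ s, ∀ y ∈ s, dist (ψ x) (ψ y) = dist x y) {a b : E} (ha : a ∈ s) (hb : b ∈ s)
    (hψa : DifferentiableAt ℝ ψ a) : fderiv ℝ ψ a (b - a) = ψ b - ψ a := by
  -- in a strictly convex space, distances pin down the points of a segment
  have hsegment : EqOn (ψ ∘ (lineMap a b : ℝ → E)) (lineMap (ψ a) (ψ b)) (Icc (0 : ℝ) 1) := by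
    intro t ht
    have hmem : lineMap a b t ∈ s := hs.lineMap_mem ha hb ht
    refine eq_lineMap_of_dist_eq_mul_of_dist_eq_mul ?_ ?_
    · rw [Function.comp_apply, dist_comm, hψ _ hmem _ ha, hψ _ ha _ hb, dist_lineMap_left,
        Real.norm_of_nonneg ht.1]
    · rw [Function.comp_apply, hψ _ hmem _ hb, hψ _ ha _ hb, dist_lineMap_right,
        Real.norm_of_nonneg (sub_nonneg.2 ht.2)]
  have h0 : (0 : ℝ) ∈ Icc (0 : ℝ) 1 := ⟨le_rfl, zero_le_one⟩
  have hψ' : HasDerivWithinAt (ψ ∘ (lineMap a b : ℝ → E)) (fderiv ℝ ψ a (b - a)) (Icc 0 1) 0 := by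
    have hψa' : HasFDerivAt ψ (fderiv ℝ ψ a) (lineMap a b (0 : ℝ)) := by
      simpa using hψa.hasFDerivAt
    exact (hψa'.comp_hasDerivAt 0 hasDerivAt_lineMap).hasDerivWithinAt
  exact (uniqueDiffOn_Icc zero_lt_one 0 h0).eq_deriv _ hψ'
    (hasDerivAt_lineMap.hasDerivWithinAt.congr hsegment (hsegment h0))

theorem IsOpen.fderiv_eq_of_dist_eq {s : Set E} (hso : IsOpen s) (hs : Convex ℝ s)
    {ψ : E → G} (hψd : DifferentiableOn ℝ ψ s)
    (hψ : ∀ x ∈ s, ∀ y ∈ s, dist (ψ x) (ψ y) = dist x y) {a b : E} (ha : a ∈ s) (hb : b ∈ s) :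
    fderiv ℝ ψ b = fderiv ℝ ψ a := by
  have hψ_affine : ψ =ᶠ[𝓝 b] fun y => ψ a + fderiv ℝ ψ a (y - a) := by
    filter_upwards [hso.mem_nhds hb] with y hy
    rw [hs.fderiv_apply_sub_eq_of_dist_eq hψ ha hy (hψd.differentiableAt (hso.mem_nhds ha)),
      add_sub_cancel]
  have hL : HasFDerivAt (fun y => ψ a + fderiv ℝ ψ a (y - a)) (fderiv ℝ ψ a) b :=
    ((fderiv ℝ ψ a).hasFDerivAt.comp b ((hasFDerivAt_id b).sub_const a)).const_add (ψ a)
  exact (hL.congr_of_eventuallyEq hψ_affine).fderiv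

end StrictConvex

section FiniteDimensional

variable {E : Type*} [NormedAddCommGroup E] [NormedSpace ℝ E]

theorem Convex.lipschitzOnWith_one_of_hasFDerivAt_linearIsometryEquiv {s : Set E}
    (hs : Convex ℝ s) {f : E → E}
    (hf : ∀ x ∈ s, ∃ e : E ≃ₗᵢ[ℝ] E, HasFDerivAt f (e : E →L[ℝ] E) x) :
    LipschitzOnWith 1 f s := by
  choose! f' hf' using hf
  refine hs.lipschitzOnWith_of_nnnorm_hasFDerivWithin_le (fun x hx => (hf' x hx).hasFDerivWithinAt)
    fun x _ => ?_
  rw [← NNReal.coe_le_coe, coe_nnnorm, NNReal.coe_one]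
  exact (f' x).toLinearIsometry.norm_toContinuousLinearMap_le

variable [FiniteDimensional ℝ E]

theorem ContinuousLinearMap.exists_linearIsometryEquiv_of_norm_map (L : E →L[ℝ] E)
    (hL : ∀ v, ‖L v‖ = ‖v‖) : ∃ e : E ≃ₗᵢ[ℝ] E, (e : E →L[ℝ] E) = L :=
  ⟨LinearIsometry.toLinearIsometryEquiv ⟨L.toLinearMap, hL⟩ rfl, rfl⟩

theorem exists_ball_dist_eq_of_hasFDerivAt_linearIsometryEquiv {W : Set E} (hW : IsOpen W)
    {ψ : E → E} (hψ : ContDiffOn ℝ 1 ψ W)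
    (hψ' : ∀ z ∈ W, ∃ e : E ≃ₗᵢ[ℝ] E, HasFDerivAt ψ (e : E →L[ℝ] E) z) {z₀ : E} (hz₀ : z₀ ∈ W) :
    ∃ ρ > 0, ball z₀ ρ ⊆ W ∧ ∀ a ∈ ball z₀ ρ, ∀ b ∈ ball z₀ ρ, dist (ψ a) (ψ b) = dist a b := by
  obtain ⟨e₀, he₀⟩ := hψ' z₀ hz₀
  have hψz₀ : ContDiffAt ℝ 1 ψ z₀ := hψ.contDiffAt (hW.mem_nhds hz₀)
  set P := hψz₀.toOpenPartialHomeomorph ψ (f' := e₀.toContinuousLinearEquiv) he₀ one_ne_zero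
  have hPψ : ⇑P = ψ := hψz₀.toOpenPartialHomeomorph_coe he₀ one_ne_zero
  have hz₀P : z₀ ∈ P.source := hψz₀.mem_toOpenPartialHomeomorph_source he₀ one_ne_zero
  obtain ⟨δ, hδ, hδW⟩ := Metric.isOpen_iff.mp (hW.inter P.open_source) z₀ ⟨hz₀, hz₀P⟩
  have hψlip : LipschitzOnWith 1 ψ (ball z₀ δ) :=
    (convex_ball z₀ δ).lipschitzOnWith_one_of_hasFDerivAt_linearIsometryEquiv
      fun x hx => hψ' x (hδW hx).1
  have hleft : ∀ a ∈ ball z₀ δ, P.symm (ψ a) = a := fun a ha => by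
    rw [← hPψ]; exact P.left_inv (hδW ha).2
  obtain ⟨r, hr, hrV⟩ : ∃ r > 0, ball (ψ z₀) r ⊆ P.target ∩ P.symm ⁻¹' ball z₀ δ := by
    refine Metric.isOpen_iff.mp (P.isOpen_inter_preimage_symm isOpen_ball) _ ⟨?_, ?_⟩
    · rw [← hPψ]; exact P.map_source hz₀P
    · rw [mem_preimage, hleft z₀ (mem_ball_self hδ)]; exact mem_ball_self hδ
  have hsymmlip : LipschitzOnWith 1 P.symm (ball (ψ z₀) r) :=
    (convex_ball _ r).lipschitzOnWith_one_of_hasFDerivAt_linearIsometryEquiv fun y hy => by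
      obtain ⟨e, he⟩ := hψ' _ (hδW (hrV hy).2).1
      exact ⟨e.symm, P.hasFDerivAt_symm (f' := e.toContinuousLinearEquiv) (hrV hy).1
        (by rwa [hPψ])⟩
  have hball : ∀ a ∈ ball z₀ (min δ r), a ∈ ball z₀ δ ∧ ψ a ∈ ball (ψ z₀) r := fun a ha =>
    have ha' : a ∈ ball z₀ δ := ball_subset_ball (min_le_left δ r) ha
    ⟨ha', calc dist (ψ a) (ψ z₀) ≤ dist a z₀ := by
                simpa using hψlip.dist_le_mul a ha' z₀ (mem_ball_self hδ)
              _ < r := (mem_ball.mp ha).trans_le (min_le_right δ r)⟩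
  refine ⟨min δ r, lt_min hδ hr, fun a ha => (hδW (hball a ha).1).1,
    fun a ha b hb => le_antisymm ?_ ?_⟩
  · simpa using hψlip.dist_le_mul a (hball a ha).1 b (hball b hb).1
  · simpa [hleft a (hball a ha).1, hleft b (hball b hb).1] using
      hsymmlip.dist_le_mul (ψ a) (hball a ha).2 (ψ b) (hball b hb).2

variable [StrictConvexSpace ℝ E]

theorem IsOpen.eventually_fderiv_eq_of_hasFDerivAt_linearIsometryEquiv {W : Set E}
    (hW : IsOpen W) {ψ : E → E} (hψ : ContDiffOn ℝ 1 ψ W)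
    (hψ' : ∀ z ∈ W, ∃ e : E ≃ₗᵢ[ℝ] E, HasFDerivAt ψ (e : E →L[ℝ] E) z) {z₀ : E} (hz₀ : z₀ ∈ W) :
    ∀ᶠ z in 𝓝 z₀, fderiv ℝ ψ z = fderiv ℝ ψ z₀ := by
  obtain ⟨ρ, hρ, hρW, hdist⟩ :=
    exists_ball_dist_eq_of_hasFDerivAt_linearIsometryEquiv hW hψ hψ' hz₀
  filter_upwards [ball_mem_nhds z₀ hρ] with z hz
  exact isOpen_ball.fderiv_eq_of_dist_eq (convex_ball z₀ ρ)
    ((hψ.differentiableOn one_ne_zero).mono hρW) hdist (mem_ball_self hρ) hz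

theorem IsOpen.eventually_fderiv_comp_inverse_eq {U : Set E} (hU : IsOpen U) {f g : E → E}
    (hf : ContDiffOn ℝ 1 f U) (hg : ContDiffOn ℝ 1 g U)
    (hg' : ∀ x ∈ U, (fderiv ℝ g x).IsInvertible)
    (hfg : ∀ x ∈ U, ∀ v, ‖fderiv ℝ f x v‖ = ‖fderiv ℝ g x v‖) {x₀ : E} (hx₀ : x₀ ∈ U) :
    ∀ᶠ x in 𝓝 x₀, fderiv ℝ f x ∘L (fderiv ℝ g x).inverse =
      fderiv ℝ f x₀ ∘L (fderiv ℝ g x₀).inverse := by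
  have hC : ∀ x ∈ U, ContDiffAt ℝ 1 f x ∧ ContDiffAt ℝ 1 g x := fun x hx =>
    ⟨hf.contDiffAt (hU.mem_nhds hx), hg.contDiffAt (hU.mem_nhds hx)⟩
  have hgB : ∀ x ∈ U, ∃ B : E ≃L[ℝ] E, HasFDerivAt g (B : E →L[ℝ] E) x ∧
      (fderiv ℝ g x).inverse = B.symm := fun x hx => by
    obtain ⟨B, hB⟩ := hg' x hx
    refine ⟨B, hB ▸ ((hC x hx).2.differentiableAt one_ne_zero).hasFDerivAt, ?_⟩
    rw [← hB, ContinuousLinearMap.inverse_equiv]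
  obtain ⟨B₀, hB₀, -⟩ := hgB x₀ hx₀
  -- `ψ = f ∘ g⁻¹`, defined near `g x₀` through a local inverse of `g`
  set P := (hC x₀ hx₀).2.toOpenPartialHomeomorph g hB₀ one_ne_zero
  have hPg : ⇑P = g := (hC x₀ hx₀).2.toOpenPartialHomeomorph_coe hB₀ one_ne_zero
  have hx₀P : x₀ ∈ P.source := (hC x₀ hx₀).2.mem_toOpenPartialHomeomorph_source hB₀ one_ne_zero
  set W := P.target ∩ P.symm ⁻¹' (U ∩ P.source)
  have hψ : ∀ y ∈ W, HasFDerivAt (f ∘ P.symm)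
      (fderiv ℝ f (P.symm y) ∘L (fderiv ℝ g (P.symm y)).inverse) y ∧
      ContDiffAt ℝ 1 (f ∘ P.symm) y := fun y hy => by
    obtain ⟨B, hB, hBinv⟩ := hgB _ hy.2.1
    rw [← hPg] at hB
    rw [hBinv]
    exact ⟨((hC _ hy.2.1).1.differentiableAt one_ne_zero).hasFDerivAt.comp y
        (P.hasFDerivAt_symm hy.1 hB),
      (hC _ hy.2.1).1.comp y (P.contDiffAt_symm hy.1 hB (hPg ▸ (hC _ hy.2.1).2))⟩
  have hψ' : ∀ y ∈ W, ∃ e : E ≃ₗᵢ[ℝ] E, HasFDerivAt (f ∘ P.symm) (e : E →L[ℝ] E) y :=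
    fun y hy => by
      obtain ⟨e, he⟩ := ContinuousLinearMap.exists_linearIsometryEquiv_of_norm_map _
        (ContinuousLinearMap.norm_comp_inverse_apply (hg' _ hy.2.1) (hfg _ hy.2.1))
      exact ⟨e, he ▸ (hψ y hy).1⟩
  have hgW : ∀ x ∈ U ∩ P.source, g x ∈ W ∧ P.symm (g x) = x := fun x hx => by
    have hx' : P.symm (g x) = x := by rw [← hPg]; exact P.left_inv hx.2
    exact ⟨⟨hPg ▸ P.map_source hx.2, by rwa [mem_preimage, hx']⟩, hx'⟩
  have hWo : IsOpen W := P.isOpen_inter_preimage_symm (hU.inter P.open_source)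
  have hloc := hWo.eventually_fderiv_eq_of_hasFDerivAt_linearIsometryEquiv
    (fun y hy => (hψ y hy).2.contDiffWithinAt) hψ' (hgW x₀ ⟨hx₀, hx₀P⟩).1
  filter_upwards [((hC x₀ hx₀).2.continuousAt.eventually hloc),
    (hU.inter P.open_source).mem_nhds ⟨hx₀, hx₀P⟩] with x hx hxU
  have hderiv : ∀ x ∈ U ∩ P.source, fderiv ℝ (f ∘ P.symm) (g x) =
      fderiv ℝ f x ∘L (fderiv ℝ g x).inverse := fun x hx => by
    rw [(hψ _ (hgW x hx).1).1.fderiv, (hgW x hx).2]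
  rwa [hderiv x hxU, hderiv x₀ ⟨hx₀, hx₀P⟩] at hx

theorem IsOpen.exists_eq_add_linearIsometryEquiv_of_norm_fderiv_eq {U : Set E} (hU : IsOpen U)
    (hUc : IsPreconnected U) {f g : E → E} (hf : ContDiffOn ℝ 1 f U) (hg : ContDiffOn ℝ 1 g U)
    (hg' : ∀ x ∈ U, (fderiv ℝ g x).IsInvertible)
    (hfg : ∀ x ∈ U, ∀ v, ‖fderiv ℝ f x v‖ = ‖fderiv ℝ g x v‖) :
    ∃ (c : E) (L : E ≃ₗᵢ[ℝ] E), ∀ x ∈ U, f x = c + L (g x) := by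
  rcases U.eq_empty_or_nonempty with rfl | ⟨x₀, hx₀⟩
  · exact ⟨0, LinearIsometryEquiv.refl ℝ E, by simp⟩
  have hconst : ∀ x ∈ U, fderiv ℝ f x ∘L (fderiv ℝ g x).inverse =
      fderiv ℝ f x₀ ∘L (fderiv ℝ g x₀).inverse := fun x hx =>
    hUc.apply_eq_of_eventually_eq
      (fun y hy => hU.eventually_fderiv_comp_inverse_eq hf hg hg' hfg hy) hx₀ hx
  obtain ⟨L, hL⟩ := ContinuousLinearMap.exists_linearIsometryEquiv_of_norm_map _
    (ContinuousLinearMap.norm_comp_inverse_apply (hg' x₀ hx₀) (hfg x₀ hx₀))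
  have hgd : DifferentiableOn ℝ g U := hg.differentiableOn one_ne_zero
  have hfL : ∀ x ∈ U, fderiv ℝ f x = fderiv ℝ (fun y => L (g y)) x := fun x hx =>
    calc fderiv ℝ f x = (fderiv ℝ f x ∘L (fderiv ℝ g x).inverse) ∘L fderiv ℝ g x := by
          rw [ContinuousLinearMap.comp_assoc, (hg' x hx).inverse_comp_self,
            ContinuousLinearMap.comp_id]
      _ = (L : E →L[ℝ] E) ∘L fderiv ℝ g x := by rw [hconst x hx, hL]
      _ = fderiv ℝ (fun y => L (g y)) x :=
        ((L : E →L[ℝ] E).hasFDerivAt.comp x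
          (hgd.differentiableAt (hU.mem_nhds hx)).hasFDerivAt).fderiv.symm
  obtain ⟨c, hc⟩ := hU.exists_eq_add_of_fderiv_eq hUc (hf.differentiableOn one_ne_zero)
    ((L : E →L[ℝ] E).differentiable.comp_differentiableOn hgd) hfL
  exact ⟨c, L, fun x hx => (hc hx).trans (add_comm _ _)⟩

end FiniteDimensional

section Matrix

variable {ι : Type*} [Fintype ι] [DecidableEq ι]

theorem norm_toEuclideanCLM_apply_eq {M N : Matrix ι ι ℝ} (h : Mᵀ * M = Nᵀ * N)
    (v : EuclideanSpace ℝ ι) :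
    ‖toEuclideanCLM (𝕜 := ℝ) M v‖ = ‖toEuclideanCLM (𝕜 := ℝ) N v‖ := by
  have hsq : ∀ A : Matrix ι ι ℝ,
      ‖toEuclideanCLM (𝕜 := ℝ) A v‖ ^ 2 = inner ℝ v (toEuclideanCLM (𝕜 := ℝ) (Aᵀ * A) v) := by
    intro A
    rw [← conjTranspose_eq_transpose_of_trivial, map_mul, ← star_eq_conjTranspose, map_star,
      ContinuousLinearMap.star_eq_adjoint, mul_apply_eq_comp,
      ContinuousLinearMap.adjoint_inner_right, real_inner_self_eq_norm_sq]
  rw [← pow_left_inj₀ (norm_nonneg _) (norm_nonneg _) two_ne_zero, hsq, hsq, h]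

theorem isInvertible_toEuclideanCLM {M : Matrix ι ι ℝ} (hM : IsUnit M) :
    (toEuclideanCLM (𝕜 := ℝ) M).IsInvertible := by
  obtain ⟨U, hU⟩ := hM.map (toEuclideanCLM (𝕜 := ℝ) (n := ι))
  exact ⟨ContinuousLinearEquiv.unitsEquiv ℝ _ U, hU⟩

theorem LinearIsometryEquiv.exists_mem_orthogonalGroup_mulVec_eq
    (L : EuclideanSpace ℝ ι ≃ₗᵢ[ℝ] EuclideanSpace ℝ ι) :
    ∃ Q ∈ orthogonalGroup ι ℝ, ∀ y, (L (WithLp.toLp 2 y)).ofLp = Q *ᵥ y := by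
  set Q := (toEuclideanCLM (𝕜 := ℝ) (n := ι)).symm (L : EuclideanSpace ℝ ι →L[ℝ] _)
  have hQL : toEuclideanCLM (𝕜 := ℝ) Q = (L : EuclideanSpace ℝ ι →L[ℝ] _) :=
    StarAlgEquiv.apply_symm_apply _ _
  refine ⟨Q, ?_, fun y => ?_⟩
  · rw [orthogonalGroup, mem_unitaryGroup_iff']
    refine EquivLike.injective (toEuclideanCLM (𝕜 := ℝ) (n := ι)) ?_
    rw [map_mul (toEuclideanCLM (𝕜 := ℝ) (n := ι)), map_star (toEuclideanCLM (𝕜 := ℝ) (n := ι)),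
      map_one, hQL]
    exact Unitary.star_mul_self_of_mem (Unitary.linearIsometryEquiv.symm L).2
  · change ((L : EuclideanSpace ℝ ι →L[ℝ] EuclideanSpace ℝ ι) (WithLp.toLp 2 y)).ofLp = _
    rw [← hQL, ofLp_toEuclideanCLM]

theorem Matrix.det_eq_one_of_mem_orthogonalGroup {Q A B : Matrix ι ι ℝ}
    (hQ : Q ∈ orthogonalGroup ι ℝ) (hAB : A = Q * B) (hpos : 0 < A.det * B.det) : Q.det = 1 := by
  have hQ2 : Q.det * Q.det = 1 := by
    simpa [star_trivial] using (det_of_mem_unitary hQ).1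
  rw [hAB, det_mul, mul_assoc] at hpos
  rcases mul_self_eq_one_iff.mp hQ2 with h | h
  · exact h
  · rw [h] at hpos
    nlinarith [mul_self_nonneg B.det]

end Matrix

section Jacobian

variable {n : ℕ}

local notation "eucl" => EuclideanSpace.equiv (Fin n) ℝ

theorem toMatrix'_fderiv {φ : (Fin n → ℝ) → Fin n → ℝ} {x : Fin n → ℝ}
    (hφ : DifferentiableAt ℝ φ x) :
    LinearMap.toMatrix' (fderiv ℝ φ x : (Fin n → ℝ) →ₗ[ℝ] Fin n → ℝ) = (jac φ x)ᵀ := by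
  ext i j
  rw [LinearMap.toMatrix'_apply, transpose_apply, jac, pd, fderiv_apply hφ]
  simp

theorem fderiv_conj_euclideanSpaceEquiv {φ : (Fin n → ℝ) → Fin n → ℝ}
    {z : EuclideanSpace ℝ (Fin n)} (hφ : DifferentiableAt ℝ φ (eucl z)) :
    fderiv ℝ ((eucl).symm ∘ φ ∘ eucl) z = toEuclideanCLM (𝕜 := ℝ) (jac φ (eucl z))ᵀ := by
  rw [(eucl).symm.comp_fderiv, (eucl).comp_right_fderiv, ← toMatrix'_fderiv hφ]
  ext v : 1
  rw [← WithLp.toLp_ofLp (p := 2) v, toEuclideanCLM_toLp, LinearMap.toMatrix'_mulVec]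
  rfl

theorem IsOpen.exists_mem_orthogonalGroup_eq_add_mulVec {Ω : Set (Fin n → ℝ)} (hΩo : IsOpen Ω)
    (hΩc : IsPreconnected Ω) {φ φ₀ : (Fin n → ℝ) → Fin n → ℝ} (hφ : ContDiffOn ℝ 1 φ Ω)
    (hφ₀ : ContDiffOn ℝ 1 φ₀ Ω) (hinv : ∀ x ∈ Ω, IsUnit (jac φ₀ x))
    (hmetric : ∀ x ∈ Ω, jac φ x * (jac φ x)ᵀ = jac φ₀ x * (jac φ₀ x)ᵀ) :
    ∃ (c : Fin n → ℝ) (Q : Matrix (Fin n) (Fin n) ℝ),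
      Q ∈ orthogonalGroup (Fin n) ℝ ∧ ∀ x ∈ Ω, φ x = c + Q *ᵥ φ₀ x := by
  have hdiff : ∀ {ψ : (Fin n → ℝ) → Fin n → ℝ}, ContDiffOn ℝ 1 ψ Ω →
      ∀ z ∈ eucl ⁻¹' Ω, DifferentiableAt ℝ ψ (eucl z) := fun hψ z hz =>
    (hψ.differentiableOn one_ne_zero).differentiableAt (hΩo.mem_nhds hz)
  have hconj : ∀ {ψ : (Fin n → ℝ) → Fin n → ℝ}, ContDiffOn ℝ 1 ψ Ω →
      ContDiffOn ℝ 1 ((eucl).symm ∘ ψ ∘ eucl) (eucl ⁻¹' Ω) := fun hψ =>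
    (eucl).symm.contDiff.comp_contDiffOn (hψ.comp (eucl).contDiff.contDiffOn (mapsTo_preimage _ _))
  obtain ⟨c, L, hL⟩ :=
    (hΩo.preimage (eucl).continuous).exists_eq_add_linearIsometryEquiv_of_norm_fderiv_eq
      ((eucl).toHomeomorph.isPreconnected_preimage.mpr hΩc) (hconj hφ) (hconj hφ₀)
      (fun z hz => by
        rw [fderiv_conj_euclideanSpaceEquiv (hdiff hφ₀ z hz)]
        exact isInvertible_toEuclideanCLM ((isUnit_transpose _).mpr (hinv _ hz)))
      (fun z hz v => by
        rw [fderiv_conj_euclideanSpaceEquiv (hdiff hφ z hz),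
          fderiv_conj_euclideanSpaceEquiv (hdiff hφ₀ z hz)]
        exact norm_toEuclideanCLM_apply_eq (by simpa using hmetric _ hz) v)
  obtain ⟨Q, hQ, hQL⟩ := L.exists_mem_orthogonalGroup_mulVec_eq
  refine ⟨eucl c, Q, hQ, fun x hx => ?_⟩
  have h := congrArg eucl (hL ((eucl).symm x) (by simpa))
  simp only [Function.comp_apply, ContinuousLinearEquiv.apply_symm_apply, map_add] at h
  rw [h, ← hQL]
  rfl

theorem transpose_jac_eq_mul_of_eq_add_mulVec {Ω : Set (Fin n → ℝ)} (hΩ : IsOpen Ω)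
    {φ φ₀ : (Fin n → ℝ) → Fin n → ℝ} {c : Fin n → ℝ} {Q : Matrix (Fin n) (Fin n) ℝ}
    (hφ : ∀ x ∈ Ω, φ x = c + Q *ᵥ φ₀ x) {x : Fin n → ℝ} (hx : x ∈ Ω)
    (hφ₀ : DifferentiableAt ℝ φ₀ x) : (jac φ x)ᵀ = Q * (jac φ₀ x)ᵀ := by
  have hQφ₀ : HasFDerivAt φ (LinearMap.toContinuousLinearMap (toLin' Q) ∘L fderiv ℝ φ₀ x) x :=
    (((LinearMap.toContinuousLinearMap (toLin' Q)).hasFDerivAt.comp x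
      hφ₀.hasFDerivAt).const_add c).congr_of_eventuallyEq
      (eventually_of_mem (hΩ.mem_nhds hx) hφ)
  rw [← toMatrix'_fderiv hQφ₀.differentiableAt, ← toMatrix'_fderiv hφ₀, hQφ₀.fderiv]
  simp [LinearMap.toMatrix'_comp]

end Jacobian

theorem stmt11 {n : ℕ} (Ω : Set (Fin n → ℝ)) (hΩo : IsOpen Ω) (hΩc : IsConnected Ω)
    (φ φ₀ : (Fin n → ℝ) → (Fin n → ℝ))
    (hφ : ContDiffOn ℝ 1 φ Ω) (hφ₀ : ContDiffOn ℝ 1 φ₀ Ω)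
    (hinv : ∀ x ∈ Ω, IsUnit (jac φ₀ x))
    (hmetric : ∀ x ∈ Ω, jac φ x * (jac φ x).transpose = jac φ₀ x * (jac φ₀ x).transpose) :
    ∃ (c : Fin n → ℝ) (Q : Matrix (Fin n) (Fin n) ℝ),
      Q ∈ Matrix.orthogonalGroup (Fin n) ℝ ∧
      (∀ x ∈ Ω, φ x = c + Q.mulVec (φ₀ x)) ∧
      ((∀ x ∈ Ω, 0 < (jac φ x).det * (jac φ₀ x).det) → Q.det = 1) := by
  obtain ⟨c, Q, hQ, hφQ⟩ :=
    hΩo.exists_mem_orthogonalGroup_eq_add_mulVec hΩc.isPreconnected hφ hφ₀ hinv hmetric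
  refine ⟨c, Q, hQ, hφQ, fun hsign => ?_⟩
  obtain ⟨x₀, hx₀⟩ := hΩc.nonempty
  have hφ₀x₀ : DifferentiableAt ℝ φ₀ x₀ :=
    (hφ₀.differentiableOn one_ne_zero).differentiableAt (hΩo.mem_nhds hx₀)
  exact det_eq_one_of_mem_orthogonalGroup hQ
    (transpose_jac_eq_mul_of_eq_add_mulVec hΩo hφQ hx₀ hφ₀x₀) (by simpa using hsign x₀ hx₀)
end
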